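/- arXiv:quant-ph/9711020 — 5 statements merged into one kernel-verified Lean document; each statement's English description precedes it below -/
import Mathlib

section
/- If a unit vector v in the Hilbert tensor product H₁ ⊗ H₂ is cyclic for the first factor, then the algebra of the second factor is maximally correlated with the algebra of the first factor in the state v. -/
open scoped InnerProductSpace

noncomputable section

/-- The (completed) Hilbert tensor product of two complex Hilbert spaces `H₁`, `H₂`,
presented as a Hilbert space `H` together with a bilinear map `tmul` (elementary tensors)
whose inner products multiply, whose elementary tensors span a dense subspace, and together
with the tensor product `map A B = A ⊗ B` of bounded operators. -/
structure HilbertTensor (H₁ H₂ H : Type*)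
    [NormedAddCommGroup H₁] [InnerProductSpace ℂ H₁] [CompleteSpace H₁]
    [NormedAddCommGroup H₂] [InnerProductSpace ℂ H₂] [CompleteSpace H₂]
    [NormedAddCommGroup H] [InnerProductSpace ℂ H] [CompleteSpace H] where
  tmul : H₁ →ₗ[ℂ] H₂ →ₗ[ℂ] H
  inner_tmul : ∀ x₁ y₁ x₂ y₂, ⟪tmul x₁ y₁, tmul x₂ y₂⟫_ℂ = ⟪x₁, x₂⟫_ℂ * ⟪y₁, y₂⟫_ℂ
  dense_span : Dense (↑(Submodule.span ℂ {z : H | ∃ x y, z = tmul x y}) : Set H)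
  map : (H₁ →L[ℂ] H₁) → (H₂ →L[ℂ] H₂) → (H →L[ℂ] H)
  map_tmul : ∀ A B x y, map A B (tmul x y) = tmul (A x) (B y)

variable {H₁ H₂ H : Type*}
  [NormedAddCommGroup H₁] [InnerProductSpace ℂ H₁] [CompleteSpace H₁]
  [NormedAddCommGroup H₂] [InnerProductSpace ℂ H₂] [CompleteSpace H₂]
  [NormedAddCommGroup H] [InnerProductSpace ℂ H] [CompleteSpace H]

/-- `v` is cyclic for the first factor: `{(A ⊗ I) v : A bounded on H₁}` is dense in `H`. -/
def HilbertTensor.CyclicFst (T : HilbertTensor H₁ H₂ H) (v : H) : Prop :=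
  Dense (Set.range fun A : H₁ →L[ℂ] H₁ => T.map A 1 v)

/-- An orthogonal projection on a Hilbert space: a self-adjoint idempotent bounded operator. -/
def IsONProj {E : Type*} [NormedAddCommGroup E] [InnerProductSpace ℂ E] [CompleteSpace E]
    (P : E →L[ℂ] E) : Prop :=
  IsSelfAdjoint P ∧ P ∘L P = P

/-- The algebra of the second factor is maximally correlated with the algebra of the first
factor in the state `v`. -/
def HilbertTensor.MaxCorrSndFst (T : HilbertTensor H₁ H₂ H) (v : H) : Prop :=
  ∀ P' : H₂ →L[ℂ] H₂, IsONProj P' → P' ≠ 0 → ∀ ε : ℝ, 0 < ε →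
    ∃ P : H₁ →L[ℂ] H₁, IsONProj P ∧ P ≠ 0 ∧
      0 < (⟪v, T.map P 1 v⟫_ℂ).re ∧
      (1 - ε) * (⟪v, T.map P 1 v⟫_ℂ).re ≤ (⟪v, T.map P P' v⟫_ℂ).re

/-- The orthogonal projection onto the span of a vector, as an operator `E →L[ℂ] E`. -/
def projSpan {E : Type*} [NormedAddCommGroup E] [InnerProductSpace ℂ E] [CompleteSpace E]
    (w : E) : E →L[ℂ] E :=
  (ℂ ∙ w).subtypeL ∘L Submodule.orthogonalProjection (ℂ ∙ w)


/-!
Write `P'` as the orthogonal projection onto a closed subspace `K`, and let `c_η : H → H₂` be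
the partial inner product with `η ∈ H₁` in the first factor. For the projection `P` onto `ℂ η`
one has `⟪v, (P ⊗ B) v⟫ = ‖η‖⁻² ⟪c_η v, B c_η v⟫`, so it suffices to find `η` with
`c_η v ≠ 0` and `(1 - ε) ‖c_η v‖² ≤ ‖P' c_η v‖²`. Cyclicity makes `{c_η v}` dense in `H₂`,
because `c_x ((A ⊗ I) v) = c_{A* x} v` and `c_x` is onto for `x ≠ 0`. Hence `c_η v` can be
taken close to a nonzero vector of `K`, relative to its own norm, and there `P'` almost
preserves the norm.
-/

open ContinuousLinearMap

theorem isONProj_iff_isStarProjection {E : Type*} [NormedAddCommGroup E]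
    [InnerProductSpace ℂ E] [CompleteSpace E] {P : E →L[ℂ] E} :
    IsONProj P ↔ IsStarProjection P :=
  ⟨fun ⟨hsa, hidem⟩ => ⟨hidem, hsa⟩, fun ⟨hidem, hsa⟩ => ⟨hsa, hidem⟩⟩

section Projection

variable {𝕜 E : Type*} [RCLike 𝕜] [NormedAddCommGroup E] [InnerProductSpace 𝕜 E]

theorem norm_sub_starProjection_le (K : Submodule 𝕜 E) [K.HasOrthogonalProjection]
    {y : E} (hy : y ∈ K) (w : E) : ‖w - K.starProjection w‖ ≤ ‖w - y‖ :=
  (K.starProjection_minimal w).trans_le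
    (ciInf_le ⟨0, Set.forall_mem_range.2 fun _ => norm_nonneg _⟩ (⟨y, hy⟩ : K))

theorem one_sub_mul_norm_sq_le_norm_starProjection_sq (K : Submodule 𝕜 E)
    [K.HasOrthogonalProjection] {y w : E} (hy : y ∈ K) {ε : ℝ}
    (hw : ‖w - y‖ ^ 2 ≤ ε * ‖w‖ ^ 2) : (1 - ε) * ‖w‖ ^ 2 ≤ ‖K.starProjection w‖ ^ 2 := by
  have hpyth := K.norm_sq_eq_add_norm_sq_starProjection w
  rw [Submodule.starProjection_orthogonal_val] at hpyth
  have hdist := norm_sub_starProjection_le K hy w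
  nlinarith [norm_nonneg (w - K.starProjection w)]

theorem re_inner_starProjection_self (K : Submodule 𝕜 E) [K.HasOrthogonalProjection] (w : E) :
    RCLike.re ⟪w, K.starProjection w⟫_𝕜 = ‖K.starProjection w‖ ^ 2 := by
  rw [← K.inner_starProjection_left_eq_right, K.re_inner_starProjection_eq_normSq (𝕜 := 𝕜)]
  rfl

end Projection

theorem projSpan_eq_starProjection {E : Type*} [NormedAddCommGroup E] [InnerProductSpace ℂ E]
    [CompleteSpace E] (η : E) : projSpan η = (ℂ ∙ η).starProjection :=
  rfl

theorem isONProj_projSpan {E : Type*} [NormedAddCommGroup E] [InnerProductSpace ℂ E]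
    [CompleteSpace E] (η : E) : IsONProj (projSpan η) :=
  projSpan_eq_starProjection η ▸ isONProj_iff_isStarProjection.mpr isStarProjection_starProjection

theorem projSpan_ne_zero {E : Type*} [NormedAddCommGroup E] [InnerProductSpace ℂ E]
    [CompleteSpace E] {η : E} (hη : η ≠ 0) : projSpan η ≠ 0 := fun h => by
  have hfix : projSpan η η = η := by
    rw [projSpan_eq_starProjection, Submodule.starProjection_eq_self_iff]
    exact Submodule.mem_span_singleton_self η
  rw [h, zero_apply] at hfix
  exact hη hfix.symm

namespace HilbertTensor

variable (T : HilbertTensor H₁ H₂ H)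

theorem norm_tmul (x : H₁) (y : H₂) : ‖T.tmul x y‖ = ‖x‖ * ‖y‖ := by
  have h := T.inner_tmul x y x y
  simp only [inner_self_eq_norm_sq_to_K] at h
  rw [← sq_eq_sq₀ (norm_nonneg _) (by positivity), mul_pow]
  exact_mod_cast h

theorem clm_ext {E : Type*} [NormedAddCommGroup E] [NormedSpace ℂ E] {f g : H →L[ℂ] E}
    (h : ∀ x y, f (T.tmul x y) = g (T.tmul x y)) : f = g :=
  ContinuousLinearMap.ext_on T.dense_span fun _ ⟨x, y, hz⟩ => hz ▸ h x y

theorem ext_inner_tmul {z z' : H} (h : ∀ x y, ⟪z, T.tmul x y⟫_ℂ = ⟪z', T.tmul x y⟫_ℂ) :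
    z = z' :=
  ext_inner_right ℂ fun u => DFunLike.congr_fun (T.clm_ext (f := innerSL ℂ z)
    (g := innerSL ℂ z') h) u

theorem adjoint_map (A : H₁ →L[ℂ] H₁) (B : H₂ →L[ℂ] H₂) :
    adjoint (T.map A B) = T.map (adjoint A) (adjoint B) := by
  refine T.clm_ext fun x y => T.ext_inner_tmul fun x' y' => ?_
  rw [adjoint_inner_left, T.map_tmul, T.map_tmul, T.inner_tmul, T.inner_tmul,
    adjoint_inner_left, adjoint_inner_left]

theorem inner_map_left (A : H₁ →L[ℂ] H₁) (B : H₂ →L[ℂ] H₂) (z w : H) :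
    ⟪T.map A B z, w⟫_ℂ = ⟪z, T.map (adjoint A) (adjoint B) w⟫_ℂ := by
  rw [← T.adjoint_map, adjoint_inner_right]

def tmulLeft (x : H₁) : H₂ →L[ℂ] H :=
  (T.tmul x).mkContinuous ‖x‖ fun y => (T.norm_tmul x y).le

def contr (x : H₁) : H →L[ℂ] H₂ :=
  adjoint (T.tmulLeft x)

theorem inner_contr (x : H₁) (u : H) (y : H₂) : ⟪T.contr x u, y⟫_ℂ = ⟪u, T.tmul x y⟫_ℂ :=
  adjoint_inner_left _ _ _

theorem contr_tmul (x x' : H₁) (y : H₂) : T.contr x (T.tmul x' y) = ⟪x, x'⟫_ℂ • y :=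
  ext_inner_right ℂ fun b => by
    rw [inner_contr, inner_tmul, inner_smul_left, inner_conj_symm]

theorem contr_zero : T.contr 0 = 0 :=
  ext fun u => ext_inner_right ℂ fun y => by
    rw [inner_contr, map_zero, LinearMap.zero_apply, inner_zero_right, zero_apply, inner_zero_left]

theorem contr_map (A : H₁ →L[ℂ] H₁) (x : H₁) (u : H) :
    T.contr x (T.map A 1 u) = T.contr (adjoint A x) u :=
  ext_inner_right ℂ fun b => by
    rw [inner_contr, inner_contr, ← adjoint_inner_right, T.adjoint_map, adjoint_one,
      T.map_tmul, one_apply_eq_self]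

theorem map_projSpan (η : H₁) (B : H₂ →L[ℂ] H₂) (u : H) :
    T.map (projSpan η) B u = ((‖η‖ ^ 2)⁻¹ : ℝ) • T.tmul η (B (T.contr η u)) := by
  rw [projSpan_eq_starProjection]
  refine T.ext_inner_tmul fun x y => ?_
  rw [inner_map_left, (isSelfAdjoint_starProjection _).adjoint_eq, T.map_tmul,
    Submodule.starProjection_singleton, map_smul, LinearMap.smul_apply, inner_smul_right,
    ← inner_contr, adjoint_inner_right, ← Complex.coe_smul, inner_smul_left, T.inner_tmul,
    Complex.conj_ofReal, Complex.ofReal_inv, RCLike.ofReal_eq_complex_ofReal]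
  ring

theorem re_inner_map_projSpan (η : H₁) (B : H₂ →L[ℂ] H₂) (u : H) :
    (⟪u, T.map (projSpan η) B u⟫_ℂ).re =
      (‖η‖ ^ 2)⁻¹ * (⟪T.contr η u, B (T.contr η u)⟫_ℂ).re := by
  rw [map_projSpan, ← Complex.coe_smul, inner_smul_right, inner_contr, Complex.re_ofReal_mul]

variable {T} in
theorem CyclicFst.denseRange_contr [Nontrivial H₁] {v : H} (hcyc : T.CyclicFst v) :
    DenseRange fun η => T.contr η v := by
  obtain ⟨x, hx⟩ := exists_ne (0 : H₁)
  have hsurj : Function.Surjective (T.contr x) := fun y =>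
    ⟨T.tmul x ((⟪x, x⟫_ℂ)⁻¹ • y), by
      rw [contr_tmul, smul_smul, mul_inv_cancel₀ (inner_self_ne_zero.mpr hx), one_smul]⟩
  refine Dense.mono ?_ (hsurj.denseRange.comp hcyc (T.contr x).continuous)
  rintro _ ⟨A, rfl⟩
  exact ⟨adjoint A x, (T.contr_map A x v).symm⟩

end HilbertTensor

theorem cyclicFst_imp_maxCorrSndFst_general
    (h₁ : 1 < Module.rank ℂ H₁)
    (T : HilbertTensor H₁ H₂ H) (v : H)
    (hcyc : T.CyclicFst v) : T.MaxCorrSndFst v := by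
  intro P' hP' hP'0 ε hε
  obtain ⟨K, _, rfl⟩ :=
    isStarProjection_iff_eq_starProjection.mp (isONProj_iff_isStarProjection.mp hP')
  obtain ⟨y, hyK, hy0⟩ := K.exists_mem_ne_zero_of_ne_bot (by rintro rfl; simp at hP'0)
  have : Nontrivial H₁ := rank_pos_iff_nontrivial.mp (zero_lt_one.trans h₁)
  let U : Set H₂ := {w | ‖w - y‖ ^ 2 < ε * ‖w‖ ^ 2}
  have hU : IsOpen U := isOpen_lt (by fun_prop) (by fun_prop)
  obtain ⟨η, hηU⟩ := hcyc.denseRange_contr.exists_mem_open hU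
    ⟨y, by simpa [U] using mul_pos hε (pow_pos (norm_pos_iff.mpr hy0) 2)⟩
  set w := T.contr η v
  have hw0 : w ≠ 0 := fun h => by
    have hlt : ‖w - y‖ ^ 2 < ε * ‖w‖ ^ 2 := hηU
    rw [h, zero_sub, norm_neg, norm_zero] at hlt
    nlinarith [sq_nonneg ‖y‖]
  have hη0 : η ≠ 0 := by rintro rfl; exact hw0 (by simp [w, T.contr_zero])
  have hcorr := one_sub_mul_norm_sq_le_norm_starProjection_sq K hyK hηU.le
  refine ⟨projSpan η, isONProj_projSpan η, projSpan_ne_zero hη0, ?_, ?_⟩ <;>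
    rw [T.re_inner_map_projSpan, one_apply_eq_self, ← RCLike.re_to_complex, inner_self_eq_norm_sq]
  · positivity
  · rw [T.re_inner_map_projSpan, ← RCLike.re_to_complex, re_inner_starProjection_self,
      mul_left_comm]
    gcongr

/-- If a unit vector `v` in the Hilbert tensor product `H₁ ⊗ H₂` is cyclic for
the first factor, then the algebra of the second factor is maximally correlated with the
algebra of the first factor in the state `v`. -/
theorem cyclicFst_imp_maxCorrSndFst
    [TopologicalSpace.SeparableSpace H₁] [TopologicalSpace.SeparableSpace H₂]
    (h₁ : 1 < Module.rank ℂ H₁) (h₂ : 1 < Module.rank ℂ H₂)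
    (T : HilbertTensor H₁ H₂ H) (v : H) (hv : ‖v‖ = 1)
    (hcyc : T.CyclicFst v) : T.MaxCorrSndFst v :=
  cyclicFst_imp_maxCorrSndFst_general h₁ T v hcyc

end
end

section
/- If the algebra of the second factor is maximally correlated with the algebra of the first factor in a unit vector v ∈ H₁ ⊗ H₂, then for every nonzero w ∈ H₂ one has (I ⊗ P_w)v ≠ 0, where P_w is the orthogonal projection onto the span of w; that is, the reduced density operator of v on H₂ does not have 0 as an eigenvalue. -/
open scoped InnerProductSpace

noncomputable section

variable {H₁ H₂ H : Type*}
  [NormedAddCommGroup H₁] [InnerProductSpace ℂ H₁] [CompleteSpace H₁]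
  [NormedAddCommGroup H₂] [InnerProductSpace ℂ H₂] [CompleteSpace H₂]
  [NormedAddCommGroup H] [InnerProductSpace ℂ H] [CompleteSpace H]

/-! If `(I ⊗ P_w) v = 0`, then `(P ⊗ P_w) v = (P ⊗ I)(I ⊗ P_w) v = 0` for every `P`, so the
correlation `⟪v, (P ⊗ P_w) v⟫` vanishes while `⟪v, (P ⊗ I) v⟫ > 0`, contradicting maximal
correlation already for `ε = 1/2`. -/

section projSpan

variable {E : Type*} [NormedAddCommGroup E] [InnerProductSpace ℂ E] [CompleteSpace E]

theorem isONProj_projSpan_s3 (w : E) : IsONProj (projSpan w) := by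
  refine ⟨isSelfAdjoint_starProjection _, ?_⟩
  ext x
  simp [projSpan, Submodule.starProjection_eq_self_iff]

theorem projSpan_apply_self (w : E) : projSpan w w = w :=
  Submodule.starProjection_eq_self_iff.2 (Submodule.mem_span_singleton_self w)

theorem projSpan_ne_zero_s3 {w : E} (hw : w ≠ 0) : projSpan w ≠ 0 := by
  intro h
  apply hw
  simpa [h] using (projSpan_apply_self w).symm

end projSpan

namespace HilbertTensor

variable (T : HilbertTensor H₁ H₂ H)

theorem ext_tmul {f g : H →L[ℂ] H} (h : ∀ x y, f (T.tmul x y) = g (T.tmul x y)) : f = g :=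
  ContinuousLinearMap.ext_on T.dense_span (by rintro _ ⟨x, y, rfl⟩; exact h x y)

theorem map_comp (A A' : H₁ →L[ℂ] H₁) (B B' : H₂ →L[ℂ] H₂) :
    T.map (A ∘L A') (B ∘L B') = T.map A B ∘L T.map A' B' :=
  T.ext_tmul fun x y => by simp [T.map_tmul]

theorem map_eq_map_one_comp_map_one (A : H₁ →L[ℂ] H₁) (B : H₂ →L[ℂ] H₂) :
    T.map A B = T.map A 1 ∘L T.map 1 B := by
  rw [← T.map_comp]
  simp only [ContinuousLinearMap.one_def, ContinuousLinearMap.comp_id,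
    ContinuousLinearMap.id_comp]

theorem MaxCorrSndFst.map_one_apply_ne_zero {T : HilbertTensor H₁ H₂ H} {v : H}
    (hmc : T.MaxCorrSndFst v) {P' : H₂ →L[ℂ] H₂} (hP' : IsONProj P') (hP'ne : P' ≠ 0) :
    T.map 1 P' v ≠ 0 := by
  intro hzero
  obtain ⟨P, -, -, hpos, hcorr⟩ := hmc P' hP' hP'ne (1 / 2) one_half_pos
  have hvanish : T.map P P' v = 0 := by
    rw [T.map_eq_map_one_comp_map_one, ContinuousLinearMap.comp_apply, hzero, map_zero]
  rw [hvanish, inner_zero_right, Complex.zero_re] at hcorr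
  linarith

end HilbertTensor

theorem maxCorr_imp_reduced_density_no_zero_eigenvalue_general
    (T : HilbertTensor H₁ H₂ H) (v : H)
    (hmc : T.MaxCorrSndFst v) :
    ∀ w : H₂, w ≠ 0 → T.map 1 (projSpan w) v ≠ 0 :=
  fun _ hw => hmc.map_one_apply_ne_zero (isONProj_projSpan_s3 _) (projSpan_ne_zero_s3 hw)

/-- if the algebra of the second factor is maximally correlated with the algebra
of the first factor in the unit vector `v ∈ H₁ ⊗ H₂`, then `(I ⊗ P_w) v ≠ 0` for every
nonzero `w ∈ H₂`; i.e. the reduced density operator of `v` on `H₂` does not have `0` as an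
eigenvalue. -/
theorem maxCorr_imp_reduced_density_no_zero_eigenvalue
    [TopologicalSpace.SeparableSpace H₁] [TopologicalSpace.SeparableSpace H₂]
    (h₁ : 1 < Module.rank ℂ H₁) (h₂ : 1 < Module.rank ℂ H₂)
    (T : HilbertTensor H₁ H₂ H) (v : H) (hv : ‖v‖ = 1)
    (hmc : T.MaxCorrSndFst v) :
    ∀ w : H₂, w ≠ 0 → T.map 1 (projSpan w) v ≠ 0 :=
  maxCorr_imp_reduced_density_no_zero_eigenvalue_general T v hmc

end
end

section
/- Let j : ℕ × ℕ → ℕ be injective with j(a,b) ≥ max(a,b) for all a, b ∈ ℕ, and let h : ℕ × ℕ × ℕ → ℂ satisfy: h(a,b,c) ≠ 0 if and only if a = j(b,c) or b = j(a,c) or c = j(a,b). Then the family of row vectors v_{a,b,·} = (h(a,b,c))_{c∈ℕ}, indexed by pairs (a,b) ∈ ℕ × ℕ, is linearly independent in the complex vector space of functions ℕ → ℂ; and symmetrically, the family of column vectors v_{·,b,c} = (h(a,b,c))_{a∈ℕ} indexed by (b,c), and the family of file vectors v_{a,·,c} = (h(a,b,c))_{b∈ℕ} indexed by (a,c), are each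 linearly independent. -/
lemma aux_li {ι : Type*} (f : ι → ℕ → ℂ) (w : ι → ℕ) (e : ι → ℕ)
    (h1 : ∀ p, f p (e p) ≠ 0)
    (h2 : ∀ p q, f p (e q) ≠ 0 → p ≠ q → w q < w p) :
    LinearIndependent ℂ f := by
  rw [linearIndependent_iff']
  intro s g hsum i hi
  by_contra hgi
  set s' := s.filter (fun p => g p ≠ 0) with hs'
  have hne : s'.Nonempty := ⟨i, by simp [hs', hi, hgi]⟩
  obtain ⟨q, hq, hqmax⟩ := s'.exists_max_image w hne
  have hq' : q ∈ s ∧ g q ≠ 0 := by simpa [hs'] using hq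
  have hev := congrFun hsum (e q)
  simp only [Finset.sum_apply, Pi.smul_apply, smul_eq_mul, Pi.zero_apply] at hev
  rw [Finset.sum_eq_single q] at hev
  · rcases mul_eq_zero.1 hev with h0 | h0
    · exact hq'.2 h0
    · exact h1 q h0
  · intro p hp hpq
    by_cases hgp : g p = 0
    · simp [hgp]
    by_cases hf : f p (e q) = 0
    · simp [hf]
    · exact absurd (h2 p q hf hpq)
        (not_lt.2 (hqmax p (Finset.mem_filter.2 ⟨hp, hgp⟩)))
  · intro hq''; exact absurd hq'.1 hq''

/-- if `j : ℕ × ℕ → ℕ` is injective with `j (a, b) ≥ max a b`, and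
`h : ℕ × ℕ × ℕ → ℂ` is nonzero at `(a, b, c)` exactly when `a = j (b, c)`, `b = j (a, c)` or
`c = j (a, b)`, then the row vectors `(h (a, b, ·))` indexed by `(a, b)`, the column vectors
`(h (·, b, c))` indexed by `(b, c)`, and the file vectors `(h (a, ·, c))` indexed by
`(a, c)`, each form a linearly independent family in the space of functions `ℕ → ℂ`. -/
theorem rows_cols_files_linearIndependent (j : ℕ × ℕ → ℕ) (hinj : Function.Injective j)
    (hmax : ∀ a b : ℕ, max a b ≤ j (a, b))
    (h : ℕ × ℕ × ℕ → ℂ)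
    (hh : ∀ a b c : ℕ, h (a, b, c) ≠ 0 ↔ (a = j (b, c) ∨ b = j (a, c) ∨ c = j (a, b))) :
    LinearIndependent ℂ (fun ab : ℕ × ℕ => fun c : ℕ => h (ab.1, ab.2, c)) ∧
    LinearIndependent ℂ (fun bc : ℕ × ℕ => fun a : ℕ => h (a, bc.1, bc.2)) ∧
    LinearIndependent ℂ (fun ac : ℕ × ℕ => fun b : ℕ => h (ac.1, b, ac.2)) := by
  have key : ∀ p q : ℕ × ℕ, j p ≤ j q → p ≠ q → j q < j p → False := by
    intro p q h1 h2 h3; omega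
  have step : ∀ p q : ℕ × ℕ, j q ≤ j p → (j p = j q → False) → j q < j p := by
    intro p q h1 h2
    rcases lt_or_eq_of_le h1 with h | h
    · exact h
    · exact absurd h.symm h2
  refine ⟨?_, ?_, ?_⟩
  · apply aux_li _ j j
    · intro p
      exact (hh p.1 p.2 (j p)).2 (Or.inr (Or.inr rfl))
    · intro p q hne hpq
      rcases (hh p.1 p.2 (j q)).1 hne with hc | hc | hc
      · -- p.1 = j (p.2, j q)
        have h1 : j q ≤ p.1 := hc ▸ le_trans (le_max_right _ _) (hmax p.2 (j q))
        have h2 : p.1 ≤ j p := le_trans (le_max_left _ _) (hmax p.1 p.2)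
        refine step p q (h1.trans h2) fun he => hpq (hinj he)
      · have h1 : j q ≤ p.2 := hc ▸ le_trans (le_max_right _ _) (hmax p.1 (j q))
        have h2 : p.2 ≤ j p := le_trans (le_max_right _ _) (hmax p.1 p.2)
        refine step p q (h1.trans h2) fun he => hpq (hinj he)
      · exact absurd (hinj hc.symm) hpq
  · apply aux_li _ j j
    · intro p
      exact (hh (j p) p.1 p.2).2 (Or.inl rfl)
    · intro p q hne hpq
      rcases (hh (j q) p.1 p.2).1 hne with hc | hc | hc
      · exact absurd (hinj hc).symm hpq
      · have h1 : j q ≤ p.1 := hc ▸ le_trans (le_max_left _ _) (hmax (j q) p.2)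
        have h2 : p.1 ≤ j p := le_trans (le_max_left _ _) (hmax p.1 p.2)
        refine step p q (h1.trans h2) fun he => hpq (hinj he)
      · have h1 : j q ≤ p.2 := hc ▸ le_trans (le_max_left _ _) (hmax (j q) p.1)
        have h2 : p.2 ≤ j p := le_trans (le_max_right _ _) (hmax p.1 p.2)
        refine step p q (h1.trans h2) fun he => hpq (hinj he)
  · apply aux_li _ j j
    · intro p
      exact (hh p.1 (j p) p.2).2 (Or.inr (Or.inl rfl))
    · intro p q hne hpq
      rcases (hh p.1 (j q) p.2).1 hne with hc | hc | hc
      · have h1 : j q ≤ p.1 := hc ▸ le_trans (le_max_left _ _) (hmax (j q) p.2)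
        have h2 : p.1 ≤ j p := le_trans (le_max_left _ _) (hmax p.1 p.2)
        refine step p q (h1.trans h2) fun he => hpq (hinj he)
      · exact absurd (hinj hc).symm hpq
      · have h1 : j q ≤ p.2 := hc ▸ le_trans (le_max_right _ _) (hmax p.1 (j q))
        have h2 : p.2 ≤ j p := le_trans (le_max_right _ _) (hmax p.1 p.2)
        refine step p q (h1.trans h2) fun he => hpq (hinj he)
end

section
/- Let j : ℕ × ℕ → ℕ be a bijection with j(a,b) ≥ max(a,b) for all a, b ∈ ℕ, and let h : ℕ × ℕ × ℕ → ℂ satisfy: h(a,b,c) ≠ 0 if and only if a = j(b,c) or b = j(a,c) or c = j(a,b). Then every finitely supported function ℕ → ℂ lies in the linear span of the row vectors v_{a,b,·} = (h(a,b,c))_{c∈ℕ}, (a,b) ∈ ℕ × ℕ; consequently (each row being finitely supported, hence in ℓ²(ℕ)) the closed linear span of {v_{a,b,·} : (a,b) ∈ ℕ × ℕ} is all of ℓ²(ℕ). -/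
/-!
Ordering the rows by `n = j (a, b)`, the row indexed by `(a, b)` is supported in `[0, n]`
(each of the three defining equations forces `c ≤ n` because `j` dominates `max`) and is
nonzero at `n`. Since `j` is onto, this is a triangular system, so by strong induction every
unit vector `e_n` lies in the span of the rows; hence so does every finitely supported
function, and these are dense in `ℓ²`.
-/

open Function

namespace Submodule

section

variable {ι R : Type*} [Semiring R] [DecidableEq ι] {S : Submodule R (ι → R)}

theorem pi_single_mem_of_one_mem {i : ι} (hi : Pi.single i 1 ∈ S) (r : R) :
    Pi.single i r ∈ S := by
  simpa [← Pi.single_smul'] using S.smul_mem r hi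

theorem mem_of_support_subset_of_pi_single_mem {f : ι → R} {s : Finset ι}
    (hfs : support f ⊆ s) (hS : ∀ i ∈ s, Pi.single i 1 ∈ S) : f ∈ S := by
  have hsum : ∑ i ∈ s, Pi.single i (f i) = f := by
    ext x
    rw [Finset.sum_apply, Finset.sum_pi_single, ite_eq_left_iff]
    exact fun hx => (notMem_support.1 (mt (@hfs x) hx)).symm
  exact hsum ▸ S.sum_mem fun i hi => pi_single_mem_of_one_mem (hS i hi) (f i)

end

theorem pi_single_mem_of_triangular {K : Type*} [Field K] {S : Submodule K (ℕ → K)}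
    (hv : ∀ n, ∃ v ∈ S, v n ≠ 0 ∧ support v ⊆ Set.Iic n) (n : ℕ) : Pi.single n 1 ∈ S := by
  induction n using Nat.strong_induction_on with
  | _ n ih =>
  obtain ⟨v, hvS, hvn, hsupp⟩ := hv n
  have hlower : support (v - Pi.single n (v n)) ⊆ Finset.range n := by
    intro c hc
    have hcn : c ≠ n := by rintro rfl; simp at hc
    have hcv : v c ≠ 0 := by simpa [Pi.single_apply, hcn] using hc
    exact Finset.mem_range.2 ((hsupp hcv).lt_of_ne hcn)
  have hlead : Pi.single n (v n) ∈ S := by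
    simpa using S.sub_mem hvS <|
      mem_of_support_subset_of_pi_single_mem hlower fun c hc => ih c (Finset.mem_range.1 hc)
  simpa [← Pi.single_smul', hvn] using S.smul_mem (v n)⁻¹ hlead

end Submodule

open scoped ENNReal in
theorem lp.dense_setOf_coe_mem {ι 𝕜 : Type*} [NormedRing 𝕜] [DecidableEq ι] {p : ℝ≥0∞}
    [Fact (1 ≤ p)] (hp : p ≠ ∞) {S : Submodule 𝕜 (ι → 𝕜)} (hS : ∀ i, Pi.single i 1 ∈ S) :
    Dense {x : lp (fun _ : ι => 𝕜) p | ⇑x ∈ S} := by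
  refine dense_iff_closure_eq.2 <| Set.eq_univ_of_forall fun x =>
    mem_closure_of_tendsto (lp.hasSum_single hp x) (Filter.Eventually.of_forall fun s => ?_)
  simp only [Set.mem_ofPred_eq, lp.coeFn_sum, lp.coeFn_single]
  exact S.sum_mem fun i _ => Submodule.pi_single_mem_of_one_mem (hS i) _

theorem support_row_subset_Iic {j : ℕ × ℕ → ℕ} (hmax : ∀ a b : ℕ, max a b ≤ j (a, b))
    {h : ℕ × ℕ × ℕ → ℂ}
    (hh : ∀ a b c : ℕ, h (a, b, c) ≠ 0 ↔ (a = j (b, c) ∨ b = j (a, c) ∨ c = j (a, b)))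
    (a b : ℕ) : support (fun c => h (a, b, c)) ⊆ Set.Iic (j (a, b)) := by
  intro c hc
  rw [Set.mem_Iic]
  rcases (hh a b c).1 hc with rfl | rfl | rfl
  · exact (le_max_right b c).trans <| (hmax b c).trans <| (le_max_left _ b).trans (hmax _ b)
  · exact (le_max_right a c).trans <| (hmax a c).trans <| (le_max_right a _).trans (hmax a _)
  · exact le_rfl

/-- if `j : ℕ × ℕ → ℕ` is a bijection with `j (a, b) ≥ max a b`, and
`h : ℕ × ℕ × ℕ → ℂ` is nonzero at `(a, b, c)` exactly when `a = j (b, c)`, `b = j (a, c)` or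
`c = j (a, b)`, then every finitely supported function `ℕ → ℂ` lies in the linear span of the
row vectors `(h (a, b, ·))`; consequently the set of `ℓ²`-sequences lying in the (algebraic)
span of the rows is dense in `ℓ²(ℕ)`, i.e. the closed linear span of the rows is all of
`ℓ²(ℕ)`. -/
theorem rows_span_dense (j : ℕ × ℕ → ℕ) (hbij : Function.Bijective j)
    (hmax : ∀ a b : ℕ, max a b ≤ j (a, b))
    (h : ℕ × ℕ × ℕ → ℂ)
    (hh : ∀ a b c : ℕ, h (a, b, c) ≠ 0 ↔ (a = j (b, c) ∨ b = j (a, c) ∨ c = j (a, b))) :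
    (∀ f : ℕ → ℂ, (Function.support f).Finite →
      f ∈ Submodule.span ℂ (Set.range fun ab : ℕ × ℕ => fun c : ℕ => h (ab.1, ab.2, c))) ∧
    Dense {x : lp (fun _ : ℕ => ℂ) 2 |
      ⇑x ∈ Submodule.span ℂ (Set.range fun ab : ℕ × ℕ => fun c : ℕ => h (ab.1, ab.2, c))} := by
  have hsingle : ∀ n, Pi.single n 1 ∈
      Submodule.span ℂ (Set.range fun ab : ℕ × ℕ => fun c : ℕ => h (ab.1, ab.2, c)) := by
    refine Submodule.pi_single_mem_of_triangular fun n => ?_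
    obtain ⟨⟨a, b⟩, rfl⟩ := hbij.surjective n
    exact ⟨_, Submodule.subset_span ⟨(a, b), rfl⟩, (hh a b _).2 (Or.inr (Or.inr rfl)),
      support_row_subset_Iic hmax hh a b⟩
  exact ⟨fun f hf => Submodule.mem_of_support_subset_of_pi_single_mem (s := hf.toFinset)
      (by simp) fun i _ => hsingle i, lp.dense_setOf_coe_mem ENNReal.ofNat_ne_top hsingle⟩
end

section
/- There exists a function h : ℕ × ℕ × ℕ → ℂ with Σ_{a,b,c} |h(a,b,c)|² = 1 such that each of the following three families is linearly independent: the row vectors (h(a,b,c))_{c∈ℕ} indexed by (a,b) ∈ ℕ × ℕ, the column vectors (h(a,b,c))_{a∈ℕ} indexed by (b,c) ∈ ℕ × ℕ, and the file vectors (h(a,b,c))_{b∈ℕ} indexed by (a,c) ∈ ℕ × ℕ. (Such an h is the coefficient matrix of a hyperentangled state of three systems with infinite-dimensional separable state spaces.) -/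
/-- Geometric sequences `n ↦ g i * t i ^ n` with nonzero leading coefficients and pairwise
distinct ratios are linearly independent: they are eigenvectors of the shift operator. -/
lemma li_geom {ι : Type*} (g t : ι → ℂ) (hg : ∀ i, g i ≠ 0) (ht : Function.Injective t) :
    LinearIndependent ℂ (fun i => fun n : ℕ => g i * t i ^ n) := by
  let f : Module.End ℂ (ℕ → ℂ) :=
    { toFun := fun v n => v (n + 1)
      map_add' := fun u v => rfl
      map_smul' := fun c v => rfl }
  refine f.eigenvectors_linearIndependent' t ht _ (fun i => ⟨?_, ?_⟩)
  · rw [Module.End.mem_eigenspace_iff]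
    funext n
    show g i * t i ^ (n + 1) = t i * (g i * t i ^ n)
    ring
  · intro hz
    exact hg i (by simpa using congrFun hz 0)

/-- Unique factorization for products of powers of two distinct primes. -/
lemma pp_inj {p q : ℕ} (hp : p.Prime) (hq : q.Prime) (hpq : p ≠ q) {b a b' a' : ℕ}
    (h : p ^ b * q ^ a = p ^ b' * q ^ a') : b = b' ∧ a = a' := by
  have h1 := congrArg (fun n => n.factorization p) h
  have h2 := congrArg (fun n => n.factorization q) h
  simp only [Nat.factorization_mul (pow_ne_zero _ hp.ne_zero) (pow_ne_zero _ hq.ne_zero),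
    Nat.factorization_pow, hp.factorization, hq.factorization, Finsupp.coe_add,
    Finsupp.coe_smul, Pi.add_apply, Pi.smul_apply, Finsupp.single_apply, smul_eq_mul,
    eq_self_iff_true, if_true, if_neg hpq, if_neg (Ne.symm hpq), mul_one, mul_zero,
    add_zero, zero_add] at h1 h2
  exact ⟨h1, h2⟩

/-- there is a square-summable (with total square sum `1`) function
`h : ℕ × ℕ × ℕ → ℂ` whose rows `(h (a, b, ·))`, columns `(h (·, b, c))` and files
`(h (a, ·, c))` each form a linearly independent family in the space of functions `ℕ → ℂ`;
such an `h` is the coefficient matrix of a hyperentangled state of three systems with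
infinite-dimensional separable state spaces. -/
theorem exists_hyperentangled_coefficient_matrix :
    ∃ h : ℕ × ℕ × ℕ → ℂ,
      HasSum (fun x : ℕ × ℕ × ℕ => ‖h x‖ ^ 2) (1 : ℝ) ∧
      LinearIndependent ℂ (fun ab : ℕ × ℕ => fun c : ℕ => h (ab.1, ab.2, c)) ∧
      LinearIndependent ℂ (fun bc : ℕ × ℕ => fun a : ℕ => h (a, bc.1, bc.2)) ∧
      LinearIndependent ℂ (fun ac : ℕ × ℕ => fun b : ℕ => h (ac.1, b, ac.2)) := by
  -- the unnormalized coefficients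
  set N : ℕ × ℕ × ℕ → ℕ := fun x =>
    2 ^ (x.1 * x.2.1) * 3 ^ (x.2.1 * x.2.2) * 5 ^ (x.2.2 * x.1) * 7 ^ (x.1 + x.2.1 + x.2.2)
    with hN
  have hNpos : ∀ x, 0 < N x := fun x => by positivity
  set H : ℕ × ℕ × ℕ → ℝ := fun x => ((N x : ℝ))⁻¹ with hH
  have hHpos : ∀ x, 0 < H x := fun x => by
    have := hNpos x; positivity
  -- summability of the squares
  have hsum : Summable (fun x : ℕ × ℕ × ℕ => H x ^ 2) := by
    have hgeo : Summable (fun n : ℕ => ((49:ℝ)⁻¹) ^ n) :=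
      summable_geometric_of_lt_one (by norm_num) (by norm_num)
    have hbig : Summable (fun x : ℕ × ℕ × ℕ =>
        ((49:ℝ)⁻¹) ^ x.1 * (((49:ℝ)⁻¹) ^ x.2.1 * ((49:ℝ)⁻¹) ^ x.2.2)) := by
      exact hgeo.mul_of_nonneg
        (hgeo.mul_of_nonneg hgeo (fun n => by positivity) (fun n => by positivity))
        (fun n => by positivity) (fun x => by positivity)
    refine Summable.of_nonneg_of_le (fun x => by positivity) (fun x => ?_) hbig
    obtain ⟨a, b, c⟩ := x
    have h1 : ((7:ℝ)) ^ (a + b + c) ≤ (N (a, b, c) : ℝ) := by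
      have : (7:ℕ) ^ (a + b + c) ≤ N (a, b, c) := by
        simp only [hN]
        calc (7:ℕ) ^ (a+b+c) = 1 * 1 * 1 * 7 ^ (a+b+c) := by ring
        _ ≤ 2 ^ (a*b) * 3 ^ (b*c) * 5 ^ (c*a) * 7 ^ (a+b+c) := by
            gcongr <;> [exact Nat.one_le_two_pow; exact Nat.one_le_pow _ _ (by norm_num);
              exact Nat.one_le_pow _ _ (by norm_num)]
      exact_mod_cast this
    have h2 : H (a, b, c) ≤ ((7:ℝ) ^ (a + b + c))⁻¹ := by
      apply inv_anti₀ (by positivity) h1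
    calc H (a,b,c) ^ 2 ≤ (((7:ℝ) ^ (a + b + c))⁻¹) ^ 2 := by
          have := (hHpos (a,b,c)).le
          gcongr
      _ = ((49:ℝ)⁻¹) ^ a * (((49:ℝ)⁻¹) ^ b * ((49:ℝ)⁻¹) ^ c) := by
          rw [← inv_pow, ← pow_mul, show (a+b+c)*2 = 2*a + (2*b + 2*c) by ring,
            pow_add, pow_add, pow_mul, pow_mul, pow_mul]
          norm_num
  set S : ℝ := ∑' x, H x ^ 2 with hS
  have hSpos : 0 < S := Summable.tsum_pos hsum (fun x => by positivity) (0,0,0) (by positivity)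
  have hsqrt : (0:ℝ) < Real.sqrt S := Real.sqrt_pos.2 hSpos
  have hC : ((((Real.sqrt S)⁻¹ : ℝ)) : ℂ) ≠ 0 := by
    exact_mod_cast (inv_pos.2 hsqrt).ne'
  -- the normalized function
  refine ⟨fun x => (((Real.sqrt S)⁻¹ * H x : ℝ) : ℂ), ?_, ?_, ?_, ?_⟩
  · have hnorm : ∀ x : ℕ × ℕ × ℕ,
        ‖(((Real.sqrt S)⁻¹ * H x : ℝ) : ℂ)‖ ^ 2 = S⁻¹ * H x ^ 2 := by
      intro x
      rw [Complex.norm_real, Real.norm_eq_abs, abs_of_pos (by positivity)]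
      rw [mul_pow, ← Real.sqrt_inv, Real.sq_sqrt (by positivity)]
    simp only [hnorm]
    have := hsum.hasSum.mul_left S⁻¹
    rwa [inv_mul_cancel₀ hSpos.ne'] at this
  · -- rows
    have heq : (fun ab : ℕ × ℕ => fun c : ℕ =>
          (((Real.sqrt S)⁻¹ * H (ab.1, ab.2, c) : ℝ) : ℂ)) =
        fun ab : ℕ × ℕ => fun c : ℕ =>
          ((((Real.sqrt S)⁻¹ : ℝ) : ℂ) * ((2:ℂ) ^ (ab.1*ab.2) * 7 ^ (ab.1+ab.2))⁻¹) *
            (((3:ℂ) ^ ab.2 * 5 ^ ab.1 * 7)⁻¹) ^ c := by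
      funext ab c
      simp only [hH, hN]
      push_cast
      rw [inv_pow, mul_assoc, ← mul_inv]
      ring
    rw [heq]
    refine li_geom _ _ (fun ab => mul_ne_zero hC (inv_ne_zero (mul_ne_zero (pow_ne_zero _ (by norm_num)) (pow_ne_zero _ (by norm_num))))) ?_
    intro ab ab' hab
    have : ((3:ℂ) ^ ab.2 * 5 ^ ab.1 * 7) = ((3:ℂ) ^ ab'.2 * 5 ^ ab'.1 * 7) :=
      inv_injective hab
    have hnat : (3:ℕ) ^ ab.2 * 5 ^ ab.1 * 7 = 3 ^ ab'.2 * 5 ^ ab'.1 * 7 := by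
      exact_mod_cast this
    obtain ⟨h1, h2⟩ := pp_inj (by norm_num) (by norm_num) (by norm_num)
      (Nat.eq_of_mul_eq_mul_right (by norm_num) hnat)
    exact Prod.ext h2 h1
  · -- columns
    have heq : (fun bc : ℕ × ℕ => fun a : ℕ =>
          (((Real.sqrt S)⁻¹ * H (a, bc.1, bc.2) : ℝ) : ℂ)) =
        fun bc : ℕ × ℕ => fun a : ℕ =>
          ((((Real.sqrt S)⁻¹ : ℝ) : ℂ) * ((3:ℂ) ^ (bc.1*bc.2) * 7 ^ (bc.1+bc.2))⁻¹) *
            (((2:ℂ) ^ bc.1 * 5 ^ bc.2 * 7)⁻¹) ^ a := by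
      funext bc a
      simp only [hH, hN]
      push_cast
      rw [inv_pow, mul_assoc, ← mul_inv]
      ring
    rw [heq]
    refine li_geom _ _ (fun bc => mul_ne_zero hC (inv_ne_zero (mul_ne_zero (pow_ne_zero _ (by norm_num)) (pow_ne_zero _ (by norm_num))))) ?_
    intro bc bc' hbc
    have : ((2:ℂ) ^ bc.1 * 5 ^ bc.2 * 7) = ((2:ℂ) ^ bc'.1 * 5 ^ bc'.2 * 7) :=
      inv_injective hbc
    have hnat : (2:ℕ) ^ bc.1 * 5 ^ bc.2 * 7 = 2 ^ bc'.1 * 5 ^ bc'.2 * 7 := by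
      exact_mod_cast this
    obtain ⟨h1, h2⟩ := pp_inj (by norm_num) (by norm_num) (by norm_num)
      (Nat.eq_of_mul_eq_mul_right (by norm_num) hnat)
    exact Prod.ext h1 h2
  · -- files
    have heq : (fun ac : ℕ × ℕ => fun b : ℕ =>
          (((Real.sqrt S)⁻¹ * H (ac.1, b, ac.2) : ℝ) : ℂ)) =
        fun ac : ℕ × ℕ => fun b : ℕ =>
          ((((Real.sqrt S)⁻¹ : ℝ) : ℂ) * ((5:ℂ) ^ (ac.2*ac.1) * 7 ^ (ac.1+ac.2))⁻¹) *
            (((2:ℂ) ^ ac.1 * 3 ^ ac.2 * 7)⁻¹) ^ b := by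
      funext ac b
      simp only [hH, hN]
      push_cast
      rw [inv_pow, mul_assoc, ← mul_inv]
      ring
    rw [heq]
    refine li_geom _ _ (fun ac => mul_ne_zero hC (inv_ne_zero (mul_ne_zero (pow_ne_zero _ (by norm_num)) (pow_ne_zero _ (by norm_num))))) ?_
    intro ac ac' hac
    have : ((2:ℂ) ^ ac.1 * 3 ^ ac.2 * 7) = ((2:ℂ) ^ ac'.1 * 3 ^ ac'.2 * 7) :=
      inv_injective hac
    have hnat : (2:ℕ) ^ ac.1 * 3 ^ ac.2 * 7 = 2 ^ ac'.1 * 3 ^ ac'.2 * 7 := by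
      exact_mod_cast this
    obtain ⟨h1, h2⟩ := pp_inj (by norm_num) (by norm_num) (by norm_num)
      (Nat.eq_of_mul_eq_mul_right (by norm_num) hnat)
    exact Prod.ext h1 h2
end
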